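/- The vector k* = (1/2, 1/3, 2/3) ∈ ℝ³ is an exceptional point of order exactly four for the lattice ℤ³: the nonzero m ∈ ℤ³ with |k*| = |k* − m| are precisely m₂ = (1,0,0), m₃ = (0,1,1) and m₄ = (1,1,1). -/

import Mathlib

/-- Embedding of an integer vector into `EuclideanSpace ℝ (Fin 3)`. -/
def intVec (m : Fin 3 → ℤ) : EuclideanSpace ℝ (Fin 3) := WithLp.toLp 2 (fun i => (m i : ℝ))

/-!
Expanding `‖k - m‖² = ‖k‖² - 2⟪k, m⟫ + ‖m‖²` turns `‖k*‖ = ‖k* - m‖` into the integer equation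
`3(a² + b² + c²) = 3a + 2b + 4c` for `m = (a, b, c)`. Multiplied by 12 it says that `6m` lies on the
sphere `(6a - 3)² + (6b - 2)² + (6c - 4)² = 29` around `6k*`, which forces `a, b, c ∈ {0, 1}`;
checking the eight candidates leaves `0` and the three vectors of the statement.
-/

theorem norm_eq_norm_sub_iff {E : Type*} [NormedAddCommGroup E] [InnerProductSpace ℝ E] (k m : E) :
    ‖k‖ = ‖k - m‖ ↔ 2 * inner ℝ k m = ‖m‖ ^ 2 := by
  rw [← sq_eq_sq₀ (norm_nonneg _) (norm_nonneg _), norm_sub_sq_real]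
  constructor <;> intro h <;> linarith

theorem two_inner_eq_norm_sq_intVec_iff (a b c : ℤ) :
    2 * inner ℝ (WithLp.toLp 2 (![1/2, 1/3, 2/3] : Fin 3 → ℝ)) (intVec ![a, b, c]) =
        ‖intVec ![a, b, c]‖ ^ 2 ↔
      3 * (a ^ 2 + b ^ 2 + c ^ 2) = 3 * a + 2 * b + 4 * c := by
  rw [EuclideanSpace.norm_eq, Real.sq_sqrt (by positivity),
    EuclideanSpace.inner_eq_star_dotProduct, ← @Int.cast_inj ℝ]
  simp only [dotProduct, intVec, Pi.star_apply, star_trivial, Fin.sum_univ_three,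
    Matrix.cons_val_zero, Matrix.cons_val_one, Matrix.cons_val, Real.norm_eq_abs, sq_abs]
  push_cast
  constructor <;> intro h <;> linarith

theorem exceptional_equation_iff (a b c : ℤ) :
    3 * (a ^ 2 + b ^ 2 + c ^ 2) = 3 * a + 2 * b + 4 * c ↔
      (a = 0 ∧ b = 0 ∧ c = 0) ∨ (a = 1 ∧ b = 0 ∧ c = 0) ∨ (a = 0 ∧ b = 1 ∧ c = 1) ∨
        (a = 1 ∧ b = 1 ∧ c = 1) := by
  constructor
  · intro h
    have hsphere : (6 * a - 3) ^ 2 + (6 * b - 2) ^ 2 + (6 * c - 4) ^ 2 = 29 := by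
      linear_combination 12 * h
    obtain ⟨ha₀, ha₁⟩ : 0 ≤ a ∧ a ≤ 1 := by
      constructor <;> nlinarith [hsphere, sq_nonneg (6 * b - 2), sq_nonneg (6 * c - 4)]
    obtain ⟨hb₀, hb₁⟩ : 0 ≤ b ∧ b ≤ 1 := by
      constructor <;> nlinarith [hsphere, sq_nonneg (6 * a - 3), sq_nonneg (6 * c - 4)]
    obtain ⟨hc₀, hc₁⟩ : 0 ≤ c ∧ c ≤ 1 := by
      constructor <;> nlinarith [hsphere, sq_nonneg (6 * a - 3), sq_nonneg (6 * b - 2)]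
    interval_cases a <;> interval_cases b <;> interval_cases c <;> omega
  · rintro (⟨rfl, rfl, rfl⟩ | ⟨rfl, rfl, rfl⟩ | ⟨rfl, rfl, rfl⟩ | ⟨rfl, rfl, rfl⟩) <;> norm_num

theorem exceptional_order_four (kstar : EuclideanSpace ℝ (Fin 3))
    (hk : kstar = WithLp.toLp 2 (![1/2, 1/3, 2/3] : Fin 3 → ℝ)) :
    ∀ m : Fin 3 → ℤ, m ≠ 0 →
      (‖kstar‖ = ‖kstar - intVec m‖
        ↔ m = ![1, 0, 0] ∨ m = ![0, 1, 1] ∨ m = ![1, 1, 1]) := by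
  intro m hm
  obtain ⟨a, b, c, rfl⟩ : ∃ a b c, m = ![a, b, c] :=
    ⟨m 0, m 1, m 2, by ext i; fin_cases i <;> rfl⟩
  rw [hk, norm_eq_norm_sub_iff, two_inner_eq_norm_sq_intVec_iff, exceptional_equation_iff]
  simp only [ne_eq, Matrix.cons_eq_zero_iff, Matrix.zero_empty, and_true] at hm
  simp only [Matrix.vecCons_inj, and_true]
  tauto
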